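/- Let X be a real Hilbert space, let m ≥ 2, and on the Hilbert product space X^m let R be the cyclic right-shift operator, M := Id − R, and define L : X^m → X^m by L y := Σ_{i=1}^{m−1} ((m − i)/m) R^{i−1} y. Then for every y ∈ Δ⊥ one has L y ∈ Δ⊥ and M(L y) = y; consequently, the image of Δ⊥ under L is exactly Δ⊥. -/

import Mathlib

open Filter Topology RealInnerProductSpace
open Fin.NatCast Fin.CommRing

theorem L_is_right_inverse_of_M_on_diagonal_complement
    {X : Type*} [NormedAddCommGroup X] [InnerProductSpace ℝ X] [CompleteSpace X]
    {m : ℕ} (hm : 2 ≤ m)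
    (R M L : PiLp 2 (fun _ : Fin m => X) → PiLp 2 (fun _ : Fin m => X))
    (hR : ∀ x : PiLp 2 (fun _ : Fin m => X), ∀ i : Fin m, R x i = x (i - ⟨1, by omega⟩))
    (hM : ∀ x : PiLp 2 (fun _ : Fin m => X), M x = x - R x)
    (hL : ∀ y : PiLp 2 (fun _ : Fin m => X),
      L y = ∑ k ∈ Finset.range (m - 1), (((m : ℝ) - (k + 1)) / m) • R^[k] y) :
    (∀ y : PiLp 2 (fun _ : Fin m => X), (∑ i, y i = 0) →
        (∑ i, L y i = 0) ∧ M (L y) = y) ∧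
      L '' {y : PiLp 2 (fun _ : Fin m => X) | ∑ i, y i = 0} =
        {y : PiLp 2 (fun _ : Fin m => X) | ∑ i, y i = 0} := by
  haveI : NeZero m := ⟨by omega⟩
  classical
  have hm0 : (m : ℝ) ≠ 0 := Nat.cast_ne_zero.mpr (by omega)
  set n := m - 1 with hn
  have hmn : m = n + 1 := by omega
  set a : ℕ → ℝ := fun k => ((m : ℝ) - (k + 1)) / m with ha
  -- sums in PiLp are pointwise
  have hsum_apply : ∀ (s : Finset ℕ) (f : ℕ → PiLp 2 (fun _ : Fin m => X)) (i : Fin m),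
      (∑ k ∈ s, f k) i = ∑ k ∈ s, f k i := by
    intro s f i
    induction s using Finset.induction with
    | empty => rfl
    | insert _ _ h ih => simp [Finset.sum_insert h, ih, PiLp.add_apply]
  have h1 : (⟨1, by omega⟩ : Fin m) = 1 := by ext; simp [Fin.val_one', Nat.mod_eq_of_lt hm]
  have hR' : ∀ x : PiLp 2 (fun _ : Fin m => X), ∀ i, R x i = x (i - 1) := by
    intro x i; rw [hR, h1]
  have hiter : ∀ (k : ℕ) (x : PiLp 2 (fun _ : Fin m => X)) (i : Fin m),
      R^[k] x i = x (i - (k : Fin m)) := by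
    intro k
    induction k with
    | zero => intro x i; exact congrArg x (sub_zero i).symm
    | succ k ih =>
      intro x i
      rw [Function.iterate_succ_apply', hR', ih]
      refine congrArg (WithLp.ofLp x) ?_
      push_cast
      ring
  have hLapp : ∀ (y : PiLp 2 (fun _ : Fin m => X)) (i : Fin m),
      L y i = ∑ k ∈ Finset.range n, a k • y (i - (k : Fin m)) := by
    intro y i
    rw [hL, hsum_apply]
    exact Finset.sum_congr rfl fun k _ => by
      rw [PiLp.smul_apply, hiter]
  -- shifted sums over Fin m
  have hshiftR : ∀ (y : PiLp 2 (fun _ : Fin m => X)) (j : Fin m),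
      ∑ i : Fin m, y (i - j) = ∑ i, y i :=
    fun y j => Fintype.sum_equiv (Equiv.subRight j) _ _ (fun i => rfl)
  have hshiftL : ∀ (y : PiLp 2 (fun _ : Fin m => X)) (i : Fin m),
      ∑ j : Fin m, y (i - j) = ∑ j, y j :=
    fun y i => Fintype.sum_equiv (Equiv.subLeft i) _ _ (fun j => rfl)
  have hrange : ∀ (g : Fin m → X), ∑ k ∈ Finset.range m, g (k : Fin m) = ∑ j : Fin m, g j := by
    intro g
    rw [← Fin.sum_univ_eq_sum_range (fun k => g (k : Fin m)) m]
    exact Fintype.sum_congr _ _ fun j => by rw [Fin.cast_val_eq_self]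
  -- sum of L y is zero on the diagonal complement
  have hLsum : ∀ y : PiLp 2 (fun _ : Fin m => X), (∑ i, y i = 0) → ∑ i, L y i = 0 := by
    intro y hy
    calc ∑ i, L y i = ∑ i : Fin m, ∑ k ∈ Finset.range n, a k • y (i - (k : Fin m)) := by
          exact Fintype.sum_congr _ _ fun i => hLapp y i
      _ = ∑ k ∈ Finset.range n, a k • ∑ i : Fin m, y (i - (k : Fin m)) := by
          rw [Finset.sum_comm]
          exact Finset.sum_congr rfl fun k _ => (Finset.smul_sum).symm
      _ = 0 := by
          refine Finset.sum_eq_zero fun k _ => ?_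
          rw [hshiftR y _, hy, smul_zero]
  -- key pointwise identity
  have hkey : ∀ y : PiLp 2 (fun _ : Fin m => X), (∑ i, y i = 0) →
      ∀ i : Fin m, L y i - L y (i - 1) = y i := by
    intro y hy i
    set f : ℕ → X := fun k => y (i - (k : Fin m)) with hf
    set b : ℕ → ℝ := fun k => if k = 0 then 0 else a (k - 1) with hb
    have hf0sum : ∑ k ∈ Finset.range m, f k = 0 := by
      rw [hrange (fun j => y (i - j)), hshiftL, hy]
    have hfy : f 0 = y i := congrArg y (sub_zero i)
    have hL1 : L y i = ∑ k ∈ Finset.range n, a k • f k := hLapp y i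
    have hL2 : L y (i - 1) = ∑ k ∈ Finset.range n, a k • f (k + 1) := by
      rw [hLapp]
      refine Finset.sum_congr rfl fun k _ => ?_
      congr 1
      show y (i - 1 - (k : Fin m)) = y (i - ((k : ℕ) + 1 : ℕ))
      refine congrArg (WithLp.ofLp y) ?_
      push_cast
      ring
    have e1 : ∑ k ∈ Finset.range n, a k • f k = ∑ k ∈ Finset.range m, a k • f k := by
      have han : a n = 0 := by
        have hmr : (m : ℝ) = (n : ℝ) + 1 := by rw [hmn]; push_cast; ring
        simp [ha, hmr]
      rw [hmn, Finset.sum_range_succ, han, zero_smul, add_zero]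
    have e2 : ∑ k ∈ Finset.range n, a k • f (k + 1) = ∑ k ∈ Finset.range m, b k • f k := by
      rw [hmn, Finset.sum_range_succ']
      simp [hb]
    have hab : ∀ k : ℕ, a k - b k = (if k = 0 then (1 : ℝ) else 0) - 1 / m := by
      intro k
      cases k with
      | zero => simp [ha, hb]; field_simp
      | succ j =>
        simp only [ha, hb, Nat.succ_ne_zero, if_false, Nat.add_sub_cancel]
        push_cast
        field_simp
        ring
    rw [hL1, hL2, e1, e2, ← Finset.sum_sub_distrib]
    have hterm : ∀ k ∈ Finset.range m, a k • f k - b k • f k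
        = ((if k = 0 then (1 : ℝ) else 0) • f k - ((1 : ℝ) / m) • f k) := by
      intro k _
      rw [← sub_smul, hab k, sub_smul]
    rw [Finset.sum_congr rfl hterm, Finset.sum_sub_distrib, ← Finset.smul_sum, hf0sum, smul_zero,
      sub_zero]
    rw [Finset.sum_eq_single_of_mem 0 (Finset.mem_range.mpr (by omega))
      (fun k _ hk => by simp [hk])]
    simpa using hfy
  -- M (L y) = y
  have hMLy : ∀ y : PiLp 2 (fun _ : Fin m => X), (∑ i, y i = 0) → M (L y) = y := by
    intro y hy
    ext i
    rw [hM]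
    show L y i - R (L y) i = y i
    rw [hR', hkey y hy i]
  -- commutation : L (M y) = M (L y) pointwise
  have hcomm : ∀ (y : PiLp 2 (fun _ : Fin m => X)) (i : Fin m),
      L (M y) i = L y i - L y (i - 1) := by
    intro y i
    have hMapp : ∀ j : Fin m, (M y) j = y j - y (j - 1) := by
      intro j; rw [hM]; show y j - R y j = _; rw [hR']
    rw [hLapp, hLapp, hLapp, ← Finset.sum_sub_distrib]
    refine Finset.sum_congr rfl fun k _ => ?_
    rw [hMapp, smul_sub]
    congr 2
    rw [sub_right_comm]
  have hMsum : ∀ y : PiLp 2 (fun _ : Fin m => X), ∑ i, (M y) i = 0 → True := fun _ _ => trivial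
  refine ⟨fun y hy => ⟨hLsum y hy, hMLy y hy⟩, ?_⟩
  ext y
  simp only [Set.mem_image, Set.mem_setOf_eq]
  constructor
  · rintro ⟨x, hx, rfl⟩
    exact hLsum x hx
  · intro hy
    refine ⟨M y, ?_, ?_⟩
    · have : ∀ i : Fin m, (M y) i = y i - y (i - 1) := by
        intro i; rw [hM]; show y i - R y i = _; rw [hR']
      calc ∑ i, (M y) i = ∑ i : Fin m, (y i - y (i - 1)) := Fintype.sum_congr _ _ this
        _ = ∑ i, y i - ∑ i : Fin m, y (i - 1) := Finset.sum_sub_distrib _ _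
        _ = 0 := by rw [hshiftR y 1, sub_self]
    · ext i
      rw [hcomm y i, hkey y hy i]
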